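/- arXiv:2507.15240 — 5 statements merged into one kernel-verified Lean document; each statement's English description precedes it below -/
import Mathlib

section
/- For every fixed t ∈ ℝ, the zero-level sets of G_t and H_t coincide away from the line a = t: {(a,s) ∈ ℝ² : G_t(a,s) = 0 and a ≠ t} = {(a,s) ∈ ℝ² : H_t(a,s) = 0 and a ≠ t}. -/
/-!
With `d = a - t`, the identity `[u]₊ - [u - 1]₊ = clamp_[0,1](u)` turns `H_t(a,s) = 0` into the
fixed-point equation `s = clamp_[0,1](s + d)`. For `d ≠ 0` the shift pushes every other point of
`[0,1]` towards an endpoint, so the only fixed point is `𝟙{d > 0}`, which is `G_t(a,s) = 0`.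
-/

section LinearOrderedAddCommGroup

variable {α : Type*} [AddCommGroup α] [LinearOrder α] [IsOrderedAddMonoid α]

theorem max_sub_max_sub_eq_max_min (u : α) {c : α} (hc : 0 ≤ c) :
    max u 0 - max (u - c) 0 = max 0 (min u c) := by
  rcases le_total u 0 with hu | hu
  · have : u - c ≤ 0 := by simpa using add_le_add hu hc
    simp [hu, this, min_le_of_left_le hu]
  rcases le_total u c with huc | huc
  · simp [hu, huc, sub_nonpos.2 huc]
  · simp [hu, huc, sub_nonneg.2 huc, hc]

theorem eq_max_min_add_iff {s d c : α} (hc : 0 ≤ c) (hd : d ≠ 0) :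
    s = max 0 (min (s + d) c) ↔ s = if 0 < d then c else 0 := by
  rcases hd.lt_or_gt with hd | hd
  · rw [if_neg hd.not_gt]
    constructor
    · intro h
      refine le_antisymm (not_lt.1 fun hs => h.not_gt ?_) (h ▸ le_max_left _ _)
      exact max_lt hs ((min_le_left _ _).trans_lt (add_lt_iff_neg_left.2 hd))
    · rintro rfl
      rw [zero_add, min_eq_left (hd.le.trans hc), max_eq_left hd.le]
  · rw [if_pos hd]
    constructor
    · intro h
      refine le_antisymm (h ▸ max_le hc (min_le_right _ _)) (not_lt.1 fun hs => h.not_lt ?_)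
      exact (lt_min (lt_add_of_pos_right s hd) hs).trans_le (le_max_right _ _)
    · rintro rfl
      rw [min_eq_right (le_add_of_nonneg_right hd.le), max_eq_right hc]

end LinearOrderedAddCommGroup

/-- For fixed `t`, the zero-level sets of `G_t(a,s) = s − 𝟙{a>t}` and
`H_t(a,s) = s + [s+a−1−t]₊ − [s+a−t]₊` coincide away from the line `a = t`. -/
theorem stmt_2 (t : ℝ) :
    {p : ℝ × ℝ | p.2 - (if p.1 > t then (1 : ℝ) else 0) = 0 ∧ p.1 ≠ t} =
    {p : ℝ × ℝ |
      p.2 + max (p.2 + p.1 - 1 - t) 0 - max (p.2 + p.1 - t) 0 = 0 ∧ p.1 ≠ t} := by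
  ext ⟨a, s⟩
  refine and_congr_left fun ha => ?_
  have hH : s + max (s + a - 1 - t) 0 - max (s + a - t) 0 = s - max 0 (min (s + (a - t)) 1) := by
    rw [← max_sub_max_sub_eq_max_min _ zero_le_one, show s + a - 1 - t = s + (a - t) - 1 by ring,
      show s + a - t = s + (a - t) by ring]
    ring
  rw [hH, sub_eq_zero, sub_eq_zero, eq_max_min_add_iff zero_le_one (sub_ne_zero.2 ha)]
  simp only [gt_iff_lt, sub_pos]
end

section
/- If a triple (θ, s, t) is feasible for the indicator-relaxed problem IND, then the rounded triple (θ, r(θ,t), t) is also feasible for IND, and moreover φ_r(r(θ,t)) ≥ φ_r(s). -/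
open Finset

/-- The indicator `𝟙{a > t}` as a real number. -/
noncomputable def indi (a t : ℝ) : ℝ := if a > t then 1 else 0

/-- `H_t(a,s) = s + [s+a−1−t]₊ − [s+a−t]₊`. -/
noncomputable def hng (t a s : ℝ) : ℝ := s + max (s + a - 1 - t) 0 - max (s + a - t) 0

/-- The predicted label vector `r(θ,t)_i = 𝟙{F θ i > t}`. -/
noncomputable def rvec {Θ I : Type*} (F : Θ → I → ℝ) (θ : Θ) (t : ℝ) (i : I) : ℝ :=
  indi (F θ i) t

/-- `(θ,t)` is non-singular if `F θ i ≠ t` for all `i`. -/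
def NonSingular {Θ I : Type*} (F : Θ → I → ℝ) (θ : Θ) (t : ℝ) : Prop := ∀ i, F θ i ≠ t

/-- The recallFn `φ_r(s) = (Σ_P s)/N₊`. -/
noncomputable def recallFn {I : Type*} (P : Finset I) (s : I → ℝ) : ℝ :=
  (∑ i ∈ P, s i) / (P.card : ℝ)

/-- `(θ,t)` is feasible for FPOR: `t ∈ [0,1]` and `Σ_P r(θ,t) ≥ α · Σ_I r(θ,t)`. -/
def FPORFeasible {Θ I : Type*} [Fintype I] (P : Finset I) (F : Θ → I → ℝ) (α : ℝ)
    (θ : Θ) (t : ℝ) : Prop :=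
  t ∈ Set.Icc (0 : ℝ) 1 ∧ ∑ i ∈ P, rvec F θ t i ≥ α * ∑ i, rvec F θ t i

/-- `(θ,s,t)` is feasible for the indicator-relaxed problem IND. -/
def INDFeasible {Θ I : Type*} [Fintype I] (P N : Finset I) (F : Θ → I → ℝ) (α : ℝ)
    (θ : Θ) (s : I → ℝ) (t : ℝ) : Prop :=
  (∀ i, s i ∈ Set.Icc (0 : ℝ) 1) ∧ t ∈ Set.Icc (0 : ℝ) 1 ∧
  (∑ i ∈ P, s i ≥ α * ∑ i, s i) ∧
  (∀ i ∈ P, s i ≤ indi (F θ i) t) ∧ (∀ i ∈ N, indi (F θ i) t ≤ s i)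

/-- `(θ,s,t)` is feasible for the hinge-relaxed problem HNG. -/
def HNGFeasible {Θ I : Type*} [Fintype I] (P N : Finset I) (F : Θ → I → ℝ) (α : ℝ)
    (θ : Θ) (s : I → ℝ) (t : ℝ) : Prop :=
  (∀ i, s i ∈ Set.Icc (0 : ℝ) 1) ∧ t ∈ Set.Icc (0 : ℝ) 1 ∧
  (∑ i ∈ P, s i ≥ α * ∑ i, s i) ∧
  (∀ i ∈ P, hng t (F θ i) (s i) ≤ 0) ∧ (∀ i ∈ N, 0 ≤ hng t (F θ i) (s i))

theorem indi_mem_Icc (a t : ℝ) : indi a t ∈ Set.Icc (0 : ℝ) 1 := by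
  unfold indi
  split <;> simp

/-- Writing the constraint as `α q ≤ (1 - α) p`, it survives raising `p` and lowering `q`. -/
theorem mul_add_le_of_mul_add_le {α p q p' q' : ℝ} (hα₀ : 0 ≤ α) (hα₁ : α ≤ 1)
    (hp : p ≤ p') (hq : q' ≤ q) (h : α * (p + q) ≤ p) : α * (p' + q') ≤ p' := by
  have hp' : (1 - α) * p ≤ (1 - α) * p' := mul_le_mul_of_nonneg_left hp (by linarith)
  have hq' : α * q' ≤ α * q := mul_le_mul_of_nonneg_left hq hα₀
  linarith

theorem sum_ge_mul_sum_of_le_on_pos_of_le_on_neg {I : Type*} [Fintype I] [DecidableEq I]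
    {P N : Finset I} (hPN : P ∪ N = Finset.univ) (hdisj : Disjoint P N) {α : ℝ}
    (hα₀ : 0 ≤ α) (hα₁ : α ≤ 1) {s r : I → ℝ} (hP : ∀ i ∈ P, s i ≤ r i)
    (hN : ∀ i ∈ N, r i ≤ s i) (h : ∑ i ∈ P, s i ≥ α * ∑ i, s i) :
    ∑ i ∈ P, r i ≥ α * ∑ i, r i := by
  have hsplit (g : I → ℝ) : ∑ i, g i = ∑ i ∈ P, g i + ∑ i ∈ N, g i := by
    rw [← Finset.sum_union hdisj, hPN]
  rw [hsplit] at h ⊢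
  exact mul_add_le_of_mul_add_le hα₀ hα₁ (sum_le_sum hP) (sum_le_sum hN) h

theorem recallFn_mono {I : Type*} {P : Finset I} {s r : I → ℝ} (h : ∀ i ∈ P, s i ≤ r i) :
    recallFn P s ≤ recallFn P r :=
  div_le_div_of_nonneg_right (sum_le_sum h) (Nat.cast_nonneg _)

theorem stmt_9_general {Θ I : Type*} [Fintype I] [DecidableEq I] (P N : Finset I)
    (hPN : P ∪ N = Finset.univ) (hdisj : Disjoint P N)
    (F : Θ → I → ℝ)
    (α : ℝ) (hα : α ∈ Set.Icc (0 : ℝ) 1)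
    (θ : Θ) (s : I → ℝ) (t : ℝ)
    (hfeas : INDFeasible P N F α θ s t) :
    INDFeasible P N F α θ (rvec F θ t) t ∧ recallFn P s ≤ recallFn P (rvec F θ t) := by
  obtain ⟨-, ht, hprec, hPle, hNle⟩ := hfeas
  refine ⟨⟨fun i => indi_mem_Icc _ _, ht, ?_, fun _ _ => le_rfl, fun _ _ => le_rfl⟩,
    recallFn_mono hPle⟩
  exact sum_ge_mul_sum_of_le_on_pos_of_le_on_neg hPN hdisj hα.1 hα.2 hPle hNle hprec

/-- If `(θ,s,t)` is feasible for IND, then the rounded triple `(θ, r(θ,t), t)` is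
also feasible for IND, and `φ_r(r(θ,t)) ≥ φ_r(s)`. -/
theorem stmt_9 {Θ I : Type*} [Fintype I] [DecidableEq I] (P N : Finset I)
    (hPN : P ∪ N = Finset.univ) (hdisj : Disjoint P N) (hP : P.Nonempty)
    (F : Θ → I → ℝ) (hF : ∀ θ i, F θ i ∈ Set.Icc (0 : ℝ) 1)
    (α : ℝ) (hα : α ∈ Set.Icc (0 : ℝ) 1)
    (θ : Θ) (s : I → ℝ) (t : ℝ)
    (hfeas : INDFeasible P N F α θ s t) :
    INDFeasible P N F α θ (rvec F θ t) t ∧ recallFn P s ≤ recallFn P (rvec F θ t) :=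
  stmt_9_general P N hPN hdisj F α hα θ s t hfeas
end

section
/- If a non-singular pair (θ, t) is feasible for FPOR, then the triple (θ, r(θ,t), t) is feasible for the hinge-relaxed problem HNG. -/
open Finset

theorem hng_indi_eq_zero {a t : ℝ} (h : a ≠ t) : hng t a (indi a t) = 0 := by
  rcases h.lt_or_gt with hlt | hgt
  · rw [indi, if_neg hlt.not_gt, hng, max_eq_right (by linarith), max_eq_right (by linarith)]
    ring
  · rw [indi, if_pos hgt, hng, max_eq_left (by linarith), max_eq_left (by linarith)]
    ring

theorem stmt_10_general {Θ I : Type*} [Fintype I] (P N : Finset I)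
    (F : Θ → I → ℝ)
    (α : ℝ)
    (θ : Θ) (t : ℝ)
    (hns : NonSingular F θ t) (hfeas : FPORFeasible P F α θ t) :
    HNGFeasible P N F α θ (rvec F θ t) t := by
  obtain ⟨ht, hsum⟩ := hfeas
  have hzero : ∀ i, hng t (F θ i) (rvec F θ t i) = 0 := fun i => hng_indi_eq_zero (hns i)
  exact ⟨fun i => indi_mem_Icc _ _, ht, hsum,
    fun i _ => (hzero i).le, fun i _ => (hzero i).ge⟩

/-- If a non-singular pair `(θ,t)` is feasible for FPOR, then `(θ, r(θ,t), t)` is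
feasible for the hinge-relaxed problem HNG. -/
theorem stmt_10 {Θ I : Type*} [Fintype I] [DecidableEq I] (P N : Finset I)
    (hPN : P ∪ N = Finset.univ) (hdisj : Disjoint P N) (hP : P.Nonempty)
    (F : Θ → I → ℝ) (hF : ∀ θ i, F θ i ∈ Set.Icc (0 : ℝ) 1)
    (α : ℝ) (hα : α ∈ Set.Icc (0 : ℝ) 1)
    (θ : Θ) (t : ℝ)
    (hns : NonSingular F θ t) (hfeas : FPORFeasible P F α θ t) :
    HNGFeasible P N F α θ (rvec F θ t) t :=
  stmt_10_general P N F α θ t hns hfeas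
end

section
/- If a triple (θ, s, t) with (θ, t) non-singular is feasible for the hinge-relaxed problem HNG, then the pair (θ, t) is feasible for FPOR. -/
open Finset

/-!
Away from the threshold (`a ≠ t`) and for `s ∈ [0,1]`, the hinge constraint `H_t(a,s) ≤ 0` forces
`s ≤ 𝟙{a>t}` and `H_t(a,s) ≥ 0` forces `𝟙{a>t} ≤ s`. So passing from `s` to the predicted labels
`r(θ,t)` raises every positive entry and lowers every negative one, and the precision constraint
`Σ_P ≥ α Σ_I`, i.e. `(1 - α) Σ_P ≥ α Σ_𝒩`, survives this for `0 ≤ α ≤ 1`.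
-/

lemma le_indi_of_hng_nonpos {t a s : ℝ} (h : hng t a s ≤ 0) (hs1 : s ≤ 1) (hne : a ≠ t) :
    s ≤ indi a t := by
  unfold hng at h
  unfold indi
  rcases lt_or_gt_of_ne hne with hlt | hgt
  · rw [if_neg (not_lt.mpr hlt.le)]
    rw [max_eq_right (by linarith)] at h
    rcases max_cases (s + a - t) 0 with ⟨h1, -⟩ | ⟨h1, -⟩ <;> linarith
  · rwa [if_pos hgt]

lemma indi_le_of_hng_nonneg {t a s : ℝ} (h : 0 ≤ hng t a s) (hs0 : 0 ≤ s) (hne : a ≠ t) :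
    indi a t ≤ s := by
  unfold hng at h
  unfold indi
  rcases lt_or_gt_of_ne hne with hlt | hgt
  · rwa [if_neg (not_lt.mpr hlt.le)]
  · rw [if_pos hgt]
    rw [max_eq_left (a := s + a - t) (by linarith)] at h
    rcases max_cases (s + a - 1 - t) 0 with ⟨h1, -⟩ | ⟨h1, -⟩ <;> linarith

theorem mul_sum_le_sum_of_le_of_compl_le {I : Type*} [Fintype I] (P : Finset I) {α : ℝ}
    (hα0 : 0 ≤ α) (hα1 : α ≤ 1) {s r : I → ℝ} (hP : ∀ i ∈ P, s i ≤ r i)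
    (hPc : ∀ i ∉ P, r i ≤ s i) (h : α * ∑ i, s i ≤ ∑ i ∈ P, s i) :
    α * ∑ i, r i ≤ ∑ i ∈ P, r i := by
  classical
  rw [← sum_add_sum_compl P s] at h
  rw [← sum_add_sum_compl P r]
  have hPsum : ∑ i ∈ P, s i ≤ ∑ i ∈ P, r i := sum_le_sum hP
  have hPcsum : ∑ i ∈ Pᶜ, r i ≤ ∑ i ∈ Pᶜ, s i :=
    sum_le_sum fun i hi => hPc i (mem_compl.mp hi)
  linarith [mul_le_mul_of_nonneg_left hPcsum hα0,
    mul_le_mul_of_nonneg_left hPsum (sub_nonneg.mpr hα1)]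

theorem stmt_11_general {Θ I : Type*} [Fintype I] [DecidableEq I] (P N : Finset I)
    (hPN : P ∪ N = Finset.univ)
    (F : Θ → I → ℝ)
    (α : ℝ) (hα : α ∈ Set.Icc (0 : ℝ) 1)
    (θ : Θ) (s : I → ℝ) (t : ℝ)
    (hns : NonSingular F θ t) (hfeas : HNGFeasible P N F α θ s t) :
    FPORFeasible P F α θ t := by
  obtain ⟨hs, ht, hsum, hPh, hNh⟩ := hfeas
  have hmemN : ∀ i ∉ P, i ∈ N := fun i hi =>
    (mem_union.mp (hPN ▸ mem_univ i)).resolve_left hi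
  exact ⟨ht, mul_sum_le_sum_of_le_of_compl_le P hα.1 hα.2
    (fun i hi => le_indi_of_hng_nonpos (hPh i hi) (hs i).2 (hns i))
    (fun i hi => indi_le_of_hng_nonneg (hNh i (hmemN i hi)) (hs i).1 (hns i)) hsum⟩

/-- If `(θ,s,t)` with non-singular `(θ,t)` is feasible for the hinge-relaxed problem
HNG, then `(θ,t)` is feasible for FPOR. -/
theorem stmt_11 {Θ I : Type*} [Fintype I] [DecidableEq I] (P N : Finset I)
    (hPN : P ∪ N = Finset.univ) (hdisj : Disjoint P N) (hP : P.Nonempty)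
    (F : Θ → I → ℝ) (hF : ∀ θ i, F θ i ∈ Set.Icc (0 : ℝ) 1)
    (α : ℝ) (hα : α ∈ Set.Icc (0 : ℝ) 1)
    (θ : Θ) (s : I → ℝ) (t : ℝ)
    (hns : NonSingular F θ t) (hfeas : HNGFeasible P N F α θ s t) :
    FPORFeasible P F α θ t :=
  stmt_11_general P N hPN F α hα θ s t hns hfeas
end

section
/- Among points with non-singular (θ, t): (1) a triple (θ*, s*, t*) with (θ*, t*) non-singular is a global solution of EQH restricted to non-singular points if and only if it is a global solution of EQL restricted to non-singular points; (2) if (θ*, s*, t*) with (θ*, t*) non-singular is a global solution of EQH restricted to non-singular points, then (θ*, t*) is a global solution of FPOR restricted to non-singular points; (3) conversely, if a non-singular (θ*, t*) is a global solution of FPOR restricted to non-singular points, then (θ*, r(θ*,t*), t*) is a global solution of EQH restricted to non-singular points. Here a global solution restricted to non-singular points means a feasible point whose objective value is at least that of every feasible point whose (θ, t)-component is non-singular. -/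
open Finset

/-- `(θ,s,t)` is feasible for the equality-lifted problem EQL. -/
def EQLFeasible {Θ I : Type*} [Fintype I] (P : Finset I) (F : Θ → I → ℝ) (α : ℝ)
    (θ : Θ) (s : I → ℝ) (t : ℝ) : Prop :=
  (∀ i, s i ∈ Set.Icc (0 : ℝ) 1) ∧ t ∈ Set.Icc (0 : ℝ) 1 ∧
  (∑ i ∈ P, s i ≥ α * ∑ i, s i) ∧
  (∀ i, s i = indi (F θ i) t)

/-- `(θ,s,t)` is feasible for the hinge-equality problem EQH. -/
def EQHFeasible {Θ I : Type*} [Fintype I] (P : Finset I) (F : Θ → I → ℝ) (α : ℝ)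
    (θ : Θ) (s : I → ℝ) (t : ℝ) : Prop :=
  (∀ i, s i ∈ Set.Icc (0 : ℝ) 1) ∧ t ∈ Set.Icc (0 : ℝ) 1 ∧
  (∑ i ∈ P, s i ≥ α * ∑ i, s i) ∧
  (∀ i, hng t (F θ i) (s i) = 0)

theorem hng_eq_zero_iff {t a s : ℝ} (hs : s ∈ Set.Icc (0 : ℝ) 1) (hat : a ≠ t) :
    hng t a s = 0 ↔ s = indi a t := by
  obtain ⟨hs0, hs1⟩ := hs
  unfold hng indi
  rcases hat.lt_or_gt with h | h
  · rw [if_neg h.not_gt, max_eq_right (by linarith : s + a - 1 - t ≤ 0)]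
    constructor
    · intro hz
      rcases max_cases (s + a - t) 0 with ⟨h2, _⟩ | ⟨h2, _⟩ <;> linarith
    · rintro rfl
      rw [max_eq_right (by linarith)]
      ring
  · rw [if_pos h, max_eq_left (by linarith : 0 ≤ s + a - t)]
    constructor
    · intro hz
      rcases max_cases (s + a - 1 - t) 0 with ⟨h1, _⟩ | ⟨h1, _⟩ <;> linarith
    · rintro rfl
      rw [max_eq_left (by linarith)]
      ring

section Feasibility

variable {Θ I : Type*} [Fintype I] {P : Finset I} {F : Θ → I → ℝ} {α : ℝ} {θ : Θ}
  {s : I → ℝ} {t : ℝ}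

theorem NonSingular.eqhFeasible_iff_eqlFeasible (hns : NonSingular F θ t) :
    EQHFeasible P F α θ s t ↔ EQLFeasible P F α θ s t := by
  refine and_congr_right fun hs => and_congr_right' <| and_congr_right' <| forall_congr' fun i => ?_
  exact hng_eq_zero_iff (hs i) (hns i)

theorem eqlFeasible_iff_fporFeasible :
    EQLFeasible P F α θ s t ↔ s = rvec F θ t ∧ FPORFeasible P F α θ t := by
  constructor
  · rintro ⟨-, ht, hratio, hs⟩
    obtain rfl : s = rvec F θ t := funext hs
    exact ⟨rfl, ht, hratio⟩
  · rintro ⟨rfl, ht, hratio⟩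
    exact ⟨fun i => indi_mem_Icc _ _, ht, hratio, fun _ => rfl⟩

theorem NonSingular.eqhFeasible_iff_fporFeasible (hns : NonSingular F θ t) :
    EQHFeasible P F α θ s t ↔ s = rvec F θ t ∧ FPORFeasible P F α θ t :=
  hns.eqhFeasible_iff_eqlFeasible.trans eqlFeasible_iff_fporFeasible

end Feasibility

theorem stmt_13_general {Θ I : Type*} [Fintype I] (P : Finset I)
    (F : Θ → I → ℝ)
    (α : ℝ) :
    (∀ (θs : Θ) (ss : I → ℝ) (ts : ℝ), NonSingular F θs ts →
      ((EQHFeasible P F α θs ss ts ∧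
          ∀ θ (s : I → ℝ) t, NonSingular F θ t → EQHFeasible P F α θ s t →
            recallFn P s ≤ recallFn P ss)
        ↔
       (EQLFeasible P F α θs ss ts ∧
          ∀ θ (s : I → ℝ) t, NonSingular F θ t → EQLFeasible P F α θ s t →
            recallFn P s ≤ recallFn P ss)))
    ∧
    (∀ (θs : Θ) (ss : I → ℝ) (ts : ℝ), NonSingular F θs ts →
      (EQHFeasible P F α θs ss ts ∧
        ∀ θ (s : I → ℝ) t, NonSingular F θ t → EQHFeasible P F α θ s t →
          recallFn P s ≤ recallFn P ss) →
      (FPORFeasible P F α θs ts ∧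
        ∀ θ t, NonSingular F θ t → FPORFeasible P F α θ t →
          recallFn P (rvec F θ t) ≤ recallFn P (rvec F θs ts)))
    ∧
    (∀ (θs : Θ) (ts : ℝ), NonSingular F θs ts →
      (FPORFeasible P F α θs ts ∧
        ∀ θ t, NonSingular F θ t → FPORFeasible P F α θ t →
          recallFn P (rvec F θ t) ≤ recallFn P (rvec F θs ts)) →
      (EQHFeasible P F α θs (rvec F θs ts) ts ∧
        ∀ θ (s : I → ℝ) t, NonSingular F θ t → EQHFeasible P F α θ s t →
          recallFn P s ≤ recallFn P (rvec F θs ts))) := by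
  refine ⟨fun θs ss ts hns => ?_, ?_, ?_⟩
  · exact and_congr hns.eqhFeasible_iff_eqlFeasible <| forall₃_congr fun θ s t =>
      forall_congr' fun hn => imp_congr_left hn.eqhFeasible_iff_eqlFeasible
  · rintro θs ss ts hns ⟨hfeas, hopt⟩
    obtain ⟨rfl, hfpor⟩ := hns.eqhFeasible_iff_fporFeasible.mp hfeas
    exact ⟨hfpor, fun θ t hn hf => hopt θ _ t hn (hn.eqhFeasible_iff_fporFeasible.mpr ⟨rfl, hf⟩)⟩
  · rintro θs ts hns ⟨hfeas, hopt⟩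
    refine ⟨hns.eqhFeasible_iff_fporFeasible.mpr ⟨rfl, hfeas⟩, fun θ s t hn hf => ?_⟩
    obtain ⟨rfl, hfpor⟩ := hn.eqhFeasible_iff_fporFeasible.mp hf
    exact hopt θ t hn hfpor

/-- Among points with non-singular `(θ,t)`:
(1) `(θ*,s*,t*)` is a global solution of EQH restricted to non-singular points iff
it is a global solution of EQL restricted to non-singular points;
(2) if `(θ*,s*,t*)` is a global solution of EQH restricted to non-singular points,
then `(θ*,t*)` is a global solution of FPOR restricted to non-singular points;
(3) conversely, if a non-singular `(θ*,t*)` is a global solution of FPOR restricted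
to non-singular points, then `(θ*, r(θ*,t*), t*)` is a global solution of EQH
restricted to non-singular points. -/
theorem stmt_13 {Θ I : Type*} [Fintype I] [DecidableEq I] (P N : Finset I)
    (hPN : P ∪ N = Finset.univ) (hdisj : Disjoint P N) (hP : P.Nonempty)
    (F : Θ → I → ℝ) (hF : ∀ θ i, F θ i ∈ Set.Icc (0 : ℝ) 1)
    (α : ℝ) (hα : α ∈ Set.Icc (0 : ℝ) 1) :
    (∀ (θs : Θ) (ss : I → ℝ) (ts : ℝ), NonSingular F θs ts →
      ((EQHFeasible P F α θs ss ts ∧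
          ∀ θ (s : I → ℝ) t, NonSingular F θ t → EQHFeasible P F α θ s t →
            recallFn P s ≤ recallFn P ss)
        ↔
       (EQLFeasible P F α θs ss ts ∧
          ∀ θ (s : I → ℝ) t, NonSingular F θ t → EQLFeasible P F α θ s t →
            recallFn P s ≤ recallFn P ss)))
    ∧
    (∀ (θs : Θ) (ss : I → ℝ) (ts : ℝ), NonSingular F θs ts →
      (EQHFeasible P F α θs ss ts ∧
        ∀ θ (s : I → ℝ) t, NonSingular F θ t → EQHFeasible P F α θ s t →
          recallFn P s ≤ recallFn P ss) →
      (FPORFeasible P F α θs ts ∧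
        ∀ θ t, NonSingular F θ t → FPORFeasible P F α θ t →
          recallFn P (rvec F θ t) ≤ recallFn P (rvec F θs ts)))
    ∧
    (∀ (θs : Θ) (ts : ℝ), NonSingular F θs ts →
      (FPORFeasible P F α θs ts ∧
        ∀ θ t, NonSingular F θ t → FPORFeasible P F α θ t →
          recallFn P (rvec F θ t) ≤ recallFn P (rvec F θs ts)) →
      (EQHFeasible P F α θs (rvec F θs ts) ts ∧
        ∀ θ (s : I → ℝ) t, NonSingular F θ t → EQHFeasible P F α θ s t →
          recallFn P s ≤ recallFn P (rvec F θs ts))) :=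
  stmt_13_general P F α
end
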